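/- arXiv:1610.07118 — 2 statements merged into one kernel-verified Lean document; each statement's English description precedes it below -/
import Mathlib

section
/- Let N be the list monoid and M any monoid, f : N → M a monoid homomorphism, and i, j positive integers. Then for any x : N, f x = pmconcat i (map f (chunk j x)). -/
def mconcat {M : Type*} [Monoid M] : List M → M
  | [] => 1
  | x :: xs => x * mconcat xs

def chunk {α : Type*} (i : ℕ) (xs : List α) : List (List α) :=
  if xs.length ≤ i ∨ i = 0 then [xs]
  else xs.take i :: chunk i (xs.drop i)
termination_by xs.length
decreasing_by
  rename_i h
  push_neg at h
  simp only [List.length_drop]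
  omega

theorem chunk_length_lt {α : Type*} (i : ℕ) (xs : List α) (h1 : 1 < i)
    (h2 : i < xs.length) : (chunk i xs).length < xs.length := by
  rw [chunk, if_neg (by omega)]
  by_cases hc : (xs.drop i).length ≤ i ∨ i = 0
  · rw [chunk, if_pos hc]
    simp only [List.length_cons, List.length_nil]
    omega
  · push_neg at hc
    have := chunk_length_lt i (xs.drop i) h1 hc.1
    simp only [List.length_cons]
    simp only [List.length_drop] at this ⊢
    omega
termination_by xs.length
decreasing_by simp only [List.length_drop]; omega

def pmconcat {M : Type*} [Monoid M] (i : ℕ) (xs : List M) : M :=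
  if h : i ≤ 1 ∨ xs.length ≤ i then mconcat xs
  else pmconcat i ((chunk i xs).map mconcat)
termination_by xs.length
decreasing_by
  push_neg at h
  simp only [List.length_map]
  exact chunk_length_lt i xs (by omega) (by omega)

theorem mconcat_append {M : Type*} [Monoid M] (a b : List M) :
    mconcat (a ++ b) = mconcat a * mconcat b := by
  induction a with
  | nil => simp [mconcat]
  | cons x xs ih => simp [mconcat, ih, mul_assoc]

theorem mconcat_chunk {α : Type*} {M : Type*} [Monoid M]
    (f : List α → M) (hf_one : f [] = 1)
    (hf_mul : ∀ x y : List α, f (x ++ y) = f x * f y)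
    (j : ℕ) (x : List α) : mconcat ((chunk j x).map f) = f x := by
  rw [chunk]
  by_cases h : x.length ≤ j ∨ j = 0
  · rw [if_pos h]; simp [mconcat]
  · rw [if_neg h]
    push_neg at h
    have ih := mconcat_chunk f hf_one hf_mul j (x.drop j)
    simp only [List.map_cons, mconcat, ih]
    rw [← hf_mul, List.take_append_drop]
termination_by x.length
decreasing_by push_neg at h; simp only [List.length_drop]; omega

theorem pmconcat_eq_mconcat {M : Type*} [Monoid M] (i : ℕ) (xs : List M) :
    pmconcat i xs = mconcat xs := by
  rw [pmconcat]
  by_cases h : i ≤ 1 ∨ xs.length ≤ i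
  · rw [dif_pos h]
  · rw [dif_neg h]
    push_neg at h
    rw [pmconcat_eq_mconcat]
    exact mconcat_chunk mconcat rfl mconcat_append i xs
termination_by xs.length
decreasing_by
  push_neg at h
  simp only [List.length_map]
  exact chunk_length_lt i xs (by omega) (by omega)

theorem parallelism_equivalence {α : Type*} {M : Type*} [Monoid M]
    (f : List α → M) (hf_one : f [] = 1)
    (hf_mul : ∀ x y : List α, f (x ++ y) = f x * f y)
    (i j : ℕ) (hi : 0 < i) (hj : 0 < j) (x : List α) :
    f x = pmconcat i ((chunk j x).map f) := by
  rw [pmconcat_eq_mconcat, mconcat_chunk f hf_one hf_mul]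
end

section
/- The string matching function toSM, mapping a string x to the pair (x, makeIndices x tg 0 (length x - 1)), is a monoid morphism: toSM [] = ([], []) and toSM (x ++ y) = toSM x <> toSM y, where (x, xis) <> (y, yis) = (x ++ y, xis ++ makeNewIndices x y tg ++ map (+ length x) yis). Equivalently, makeIndices (x ++ y) tg 0 (length (x ++ y) - 1) = makeIndices x tg 0 (length x - 1) ++ makeNewIndices x y tg ++ map (+ length x) (makeIndices y tg 0 (length y - 1)). -/
/-!
Every index list involved is the list of good positions filtered from an interval. Cut
`[0, |x| + |y|)` at `m = |x| - (|tg| - 1)` and at `|x|`: an occurrence starting before `m` lies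
inside `x`, and `x` has no occurrence starting at or after `m`; an occurrence starting at
`|x| + i` is an occurrence in `y` at `i`; what remains is the window `[m, |x|)` of occurrences
straddling the seam, which is exactly what `makeNewIndices` scans (it is empty when `|tg| < 2`).
-/

/-- `subString o l s = take l (drop o s)` -/
def subString (o l : ℕ) (s : List Char) : List Char := (s.drop o).take l

/-- `i` is a good index of `s` for target `tg`. -/
def goodIndex (s tg : List Char) (i : ℕ) : Prop :=
  subString i tg.length s = tg ∧ i + tg.length ≤ s.length

instance (s tg : List Char) (i : ℕ) : Decidable (goodIndex s tg i) := by
  unfold goodIndex; exact instDecidableAnd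

/-- Collect all good indices of `s` for `tg` in the range `[lo, hi]`. -/
def makeIndices (s tg : List Char) (lo : ℕ) (hi : ℤ) : List ℕ :=
  if hi < lo then []
  else if goodIndex s tg lo then lo :: makeIndices s tg (lo + 1) hi
  else makeIndices s tg (lo + 1) hi
termination_by (hi + 1 - lo).toNat
decreasing_by all_goals (rename_i h _; omega)

def makeNewIndices (sl sr tg : List Char) : List ℕ :=
  if 2 ≤ tg.length then
    makeIndices (sl ++ sr) tg (max (sl.length - (tg.length - 1)) 0)
      ((sl.length : ℤ) - 1)
  else []

/-- The string-matcher operation on pairs (string, index list). -/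
def smOp (tg : List Char) (a b : List Char × List ℕ) : List Char × List ℕ :=
  (a.1 ++ b.1, a.2 ++ makeNewIndices a.1 b.1 tg ++ b.2.map (· + a.1.length))

/-- The string matching function. -/
def toSM (tg x : List Char) : List Char × List ℕ :=
  (x, makeIndices x tg 0 ((x.length : ℤ) - 1))

theorem goodIndex_append_left_iff {x y tg : List Char} {i : ℕ}
    (hi : i + tg.length ≤ x.length) :
    goodIndex (x ++ y) tg i ↔ goodIndex x tg i := by
  unfold goodIndex subString
  rw [List.drop_append_of_le_length (by omega),
    List.take_append_of_le_length (by rw [List.length_drop]; omega)]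
  exact and_congr_right fun _ => iff_of_true (by rw [List.length_append]; omega) hi

theorem goodIndex_append_right_iff (x y tg : List Char) (i : ℕ) :
    goodIndex (x ++ y) tg (i + x.length) ↔ goodIndex y tg i := by
  unfold goodIndex subString
  rw [add_comm i, List.drop_length_add_append, List.length_append]
  exact and_congr_right fun _ => by omega

theorem makeIndices_eq_filter (s tg : List Char) (lo : ℕ) (hi : ℤ) :
    makeIndices s tg lo hi =
      (List.range' lo (hi + 1 - lo).toNat).filter (fun i => goodIndex s tg i) := by
  induction lo using makeIndices.induct s tg hi with
  | case1 lo h => rw [makeIndices, if_pos h, Int.toNat_eq_zero.2 (by omega)]; rfl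
  | case2 lo h hg ih | case3 lo h hg ih =>
    rw [makeIndices, if_neg h, ih, show (hi + 1 - lo).toNat = (hi + 1 - ↑(lo + 1)).toNat + 1 by
      omega, List.range'_succ]
    simp [hg]

theorem makeIndices_zero_length_sub_one (s tg : List Char) :
    makeIndices s tg 0 ((s.length : ℤ) - 1) =
      (List.range s.length).filter (fun i => goodIndex s tg i) := by
  rw [makeIndices_eq_filter, List.range_eq_range',
    show ((s.length : ℤ) - 1 + 1 - ((0 : ℕ) : ℤ)).toNat = s.length by omega]

theorem makeNewIndices_eq_filter (x y tg : List Char) :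
    makeNewIndices x y tg =
      (List.range' (x.length - (tg.length - 1)) (min x.length (tg.length - 1))).filter
        (fun i => goodIndex (x ++ y) tg i) := by
  unfold makeNewIndices
  split_ifs with htg
  · rw [makeIndices_eq_filter, show ((x.length : ℤ) - 1 + 1 -
      (max (x.length - (tg.length - 1)) 0 : ℕ)).toNat = min x.length (tg.length - 1) by omega,
    Nat.max_zero]
  · rw [show min x.length (tg.length - 1) = 0 by omega, List.range'_zero, List.filter_nil]

section Occurrences

variable (x y tg : List Char)

theorem filter_goodIndex_append_range_length_left :
    (List.range x.length).filter (fun i => goodIndex (x ++ y) tg i) =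
      (List.range x.length).filter (fun i => goodIndex x tg i) ++
        (List.range' (x.length - (tg.length - 1)) (min x.length (tg.length - 1))).filter
          (fun i => goodIndex (x ++ y) tg i) := by
  set m := x.length - (tg.length - 1)
  set k := min x.length (tg.length - 1)
  have hsplit : List.range' 0 m ++ List.range' m k = List.range x.length := by
    simpa [List.range_eq_range', show m + k = x.length by omega] using
      List.range'_append_1 (s := 0) (m := m) (n := k)
  have hbefore : (List.range' 0 m).filter (fun i => goodIndex (x ++ y) tg i) =
      (List.range' 0 m).filter (fun i => goodIndex x tg i) :=
    List.filter_congr fun i hi => by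
      rw [List.mem_range'_1] at hi
      simp only [goodIndex_append_left_iff (show i + tg.length ≤ x.length by omega)]
  have hwindow : (List.range' m k).filter (fun i => goodIndex x tg i) = [] :=
    List.filter_eq_nil_iff.2 fun i hi hg => by
      rw [List.mem_range'_1] at hi
      have := (of_decide_eq_true hg).2
      omega
  rw [← hsplit, List.filter_append, List.filter_append, hbefore, hwindow, List.append_nil]

theorem filter_goodIndex_append_range'_length_right :
    (List.range' x.length y.length).filter (fun i => goodIndex (x ++ y) tg i) =
      ((List.range y.length).filter (fun i => goodIndex y tg i)).map (· + x.length) := by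
  have hshift : List.range' x.length y.length = (List.range y.length).map (· + x.length) := by
    simp only [List.range'_eq_map_range, Nat.add_comm x.length]
  rw [hshift, List.filter_map]
  congr 1
  exact List.filter_congr fun i _ => by
    simp only [Function.comp_apply, goodIndex_append_right_iff]

theorem filter_goodIndex_append_range_length :
    (List.range (x ++ y).length).filter (fun i => goodIndex (x ++ y) tg i) =
      (List.range x.length).filter (fun i => goodIndex x tg i) ++
        (List.range' (x.length - (tg.length - 1)) (min x.length (tg.length - 1))).filter
          (fun i => goodIndex (x ++ y) tg i) ++
        ((List.range y.length).filter (fun i => goodIndex y tg i)).map (· + x.length) := by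
  rw [List.length_append, List.range_eq_range', ← List.range'_append_1, List.filter_append,
    ← List.range_eq_range', filter_goodIndex_append_range_length_left,
    Nat.zero_add, filter_goodIndex_append_range'_length_right]

end Occurrences

/-- `toSM` is a monoid morphism. -/
theorem toSM_morphism (tg : List Char) (x y : List Char) :
    toSM tg [] = ([], []) ∧
    toSM tg (x ++ y) = smOp tg (toSM tg x) (toSM tg y) := by
  refine ⟨?_, ?_⟩
  · rw [toSM, makeIndices_zero_length_sub_one]
    rfl
  · simp only [toSM, smOp, makeIndices_zero_length_sub_one, makeNewIndices_eq_filter]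
    rw [filter_goodIndex_append_range_length]
end
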